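/- arXiv:1710.08622 — 4 statements merged into one kernel-verified Lean document; each statement's English description precedes it below -/
import Mathlib

section
/- Let N be a bounded operator on a Hilbert space K with ‖N‖ ≤ 1 and N² = 0, and let H ⊆ K be a closed subspace with orthogonal projection P. If T ∈ B(H) satisfies T = 2·P N|_H (the compression of 2N to H), then the numerical radius of T is at most 1. -/
open scoped InnerProductSpace
open ContinuousLinearMap

/-! Write `x = p + q` with `p` the projection of `x` onto the line through `N x`. Since
`N² = 0`, `N p = 0`, so `N x = N q`; and `N x ⟂ q`, so `⟪N x, x⟫ = ⟪N q, p⟫`. Hence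
`|⟪N x, x⟫| ≤ ‖N‖ ‖q‖ ‖p‖ ≤ ‖N‖ ‖x‖² / 2`, and compressing `2N` to `H` does not change
`⟪2N ξ, ξ⟫` for `ξ ∈ H`. -/

section SquareZero

variable {𝕜 E : Type*} [RCLike 𝕜] [NormedAddCommGroup E] [InnerProductSpace 𝕜 E]

theorem two_mul_norm_mul_norm_le_norm_add_sq_of_inner_eq_zero {p q : E} (h : ⟪p, q⟫_𝕜 = 0) :
    2 * (‖p‖ * ‖q‖) ≤ ‖p + q‖ ^ 2 := by
  rw [sq, norm_add_sq_eq_norm_sq_add_norm_sq_of_inner_eq_zero p q h, ← sq, ← sq]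
  exact (mul_assoc 2 ‖p‖ ‖q‖).symm.trans_le (two_mul_le_add_sq _ _)

theorem norm_inner_apply_self_le_of_mul_self_eq_zero (N : E →L[𝕜] E) (hN2 : N * N = 0) (x : E) :
    ‖⟪N x, x⟫_𝕜‖ ≤ ‖N‖ / 2 * ‖x‖ ^ 2 := by
  set L := 𝕜 ∙ N x
  set p := L.starProjection x
  set q := x - p
  have hpL : p ∈ L := L.starProjection_apply_mem x
  have hqL : q ∈ Lᗮ := L.sub_starProjection_mem_orthogonal x
  have hNp : N p = 0 := by
    obtain ⟨c, hc⟩ := Submodule.mem_span_singleton.mp hpL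
    rw [← hc, map_smul, ← mul_apply_eq_comp, hN2, zero_apply, smul_zero]
  have hNq : N q = N x := by rw [map_sub, hNp, sub_zero]
  have hx : x = p + q := (add_sub_cancel p x).symm
  have hinner : ⟪N x, x⟫_𝕜 = ⟪N q, p⟫_𝕜 := by
    calc ⟪N x, x⟫_𝕜 = ⟪N x, p⟫_𝕜 + ⟪N x, q⟫_𝕜 := by rw [← inner_add_right, ← hx]
      _ = ⟪N q, p⟫_𝕜 := by
        rw [Submodule.inner_right_of_mem_orthogonal (Submodule.mem_span_singleton_self (N x)) hqL,
          add_zero, hNq]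
  calc ‖⟪N x, x⟫_𝕜‖ = ‖⟪N q, p⟫_𝕜‖ := by rw [hinner]
    _ ≤ ‖N q‖ * ‖p‖ := norm_inner_le_norm _ _
    _ ≤ ‖N‖ * ‖q‖ * ‖p‖ := by gcongr; exact N.le_opNorm q
    _ = ‖N‖ / 2 * (2 * (‖p‖ * ‖q‖)) := by ring
    _ ≤ ‖N‖ / 2 * ‖p + q‖ ^ 2 := by
      gcongr
      exact two_mul_norm_mul_norm_le_norm_add_sq_of_inner_eq_zero
        (Submodule.inner_right_of_mem_orthogonal hpL hqL)
    _ = ‖N‖ / 2 * ‖x‖ ^ 2 := by rw [← hx]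

end SquareZero

theorem numericalRadius_le_one_of_nilpotent_dilation_general
    {K : Type*} [NormedAddCommGroup K] [InnerProductSpace ℂ K]
    (H : Submodule ℂ K) [CompleteSpace H]
    (N : K →L[ℂ] K) (hN : ‖N‖ ≤ 1) (hN2 : N * N = 0)
    (T : H →L[ℂ] H)
    (hT : ∀ ξ : H, T ξ = (2 : ℂ) • (H.orthogonalProjectionOnto (N (ξ : K)))) :
    ∀ ξ : H, ‖ξ‖ = 1 → ‖⟪T ξ, ξ⟫_ℂ‖ ≤ 1 := by
  intro ξ hξ
  have hcompress : ⟪T ξ, ξ⟫_ℂ = 2 * ⟪N ξ, (ξ : K)⟫_ℂ := by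
    rw [hT, inner_smul_left, Submodule.inner_orthogonalProjectionOnto_eq_of_mem_right, map_ofNat]
  have hbound := norm_inner_apply_self_le_of_mul_self_eq_zero N hN2 (ξ : K)
  rw [Submodule.norm_coe, hξ] at hbound
  calc ‖⟪T ξ, ξ⟫_ℂ‖ = 2 * ‖⟪N ξ, (ξ : K)⟫_ℂ‖ := by rw [hcompress, norm_mul]; norm_num
    _ ≤ 1 := by linarith

/-- If `N` is a contraction on `K` with `N² = 0` and `T ∈ B(H)` is the
compression of `2N` to a closed subspace `H ⊆ K`, then `w(T) ≤ 1`. -/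
theorem numericalRadius_le_one_of_nilpotent_dilation
    {K : Type*} [NormedAddCommGroup K] [InnerProductSpace ℂ K] [CompleteSpace K]
    (H : Submodule ℂ K) [CompleteSpace H]
    (N : K →L[ℂ] K) (hN : ‖N‖ ≤ 1) (hN2 : N * N = 0)
    (T : H →L[ℂ] H)
    (hT : ∀ ξ : H, T ξ = (2 : ℂ) • (H.orthogonalProjectionOnto (N (ξ : K)))) :
    ∀ ξ : H, ‖ξ‖ = 1 → ‖⟪T ξ, ξ⟫_ℂ‖ ≤ 1 :=
  numericalRadius_le_one_of_nilpotent_dilation_general H N hN hN2 T hT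
end

section
/- Let T ∈ B(H) and suppose there exists a selfadjoint operator A with 0 ≤ A ≤ I such that the 2×2 operator matrix [[A, T*],[T, I−A]] acting on H ⊕ H is positive semidefinite. Then the numerical radius of T is at most 1/2. -/
/-!
Evaluate the block form at `(ξ, c • ξ)` with `|c| = 1`: the two `A`-terms cancel and the form
becomes `‖ξ‖² + 2 Re (c ⟪T ξ, ξ⟫)`. Choosing `c` to rotate `⟪T ξ, ξ⟫` onto the negative real axis,
positivity gives `1 - 2 |⟪T ξ, ξ⟫| ≥ 0` for unit `ξ`.
-/

open scoped InnerProductSpace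
open ContinuousLinearMap

theorem re_blockForm_smul_eq {𝕜 H : Type*} [RCLike 𝕜] [NormedAddCommGroup H]
    [InnerProductSpace 𝕜 H] [CompleteSpace H] (T A : H →L[𝕜] H) (ξ : H) {c : 𝕜} (hc : ‖c‖ = 1) :
    RCLike.re (⟪A ξ + adjoint T (c • ξ), ξ⟫_𝕜 + ⟪T ξ + (1 - A) (c • ξ), c • ξ⟫_𝕜) =
      ‖ξ‖ ^ 2 + 2 * RCLike.re (c * ⟪T ξ, ξ⟫_𝕜) := by
  have hcc : starRingEnd 𝕜 c * c = 1 := by simp [RCLike.conj_mul, hc]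
  have hadj : ⟪adjoint T (c • ξ), ξ⟫_𝕜 = starRingEnd 𝕜 (c * ⟪T ξ, ξ⟫_𝕜) := by
    rw [adjoint_inner_left, inner_smul_left, map_mul, inner_conj_symm]
  have hform : ⟪A ξ + adjoint T (c • ξ), ξ⟫_𝕜 + ⟪T ξ + (1 - A) (c • ξ), c • ξ⟫_𝕜 =
      ‖ξ‖ ^ 2 + (c * ⟪T ξ, ξ⟫_𝕜 + starRingEnd 𝕜 (c * ⟪T ξ, ξ⟫_𝕜)) := by
    rw [inner_add_left, hadj, inner_add_left, (1 - A).map_smul, sub_apply, one_apply_eq_self,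
      inner_smul_right, inner_smul_right, inner_smul_left, inner_sub_left,
      inner_self_eq_norm_sq_to_K]
    linear_combination (‖ξ‖ ^ 2 - ⟪A ξ, ξ⟫_𝕜) * hcc
  rw [hform, map_add, map_add, RCLike.conj_re, ← RCLike.ofReal_pow, RCLike.ofReal_re]
  ring

theorem numericalRadius_le_half_of_block_positive_general
    {H : Type*} [NormedAddCommGroup H] [InnerProductSpace ℂ H] [CompleteSpace H]
    (T A : H →L[ℂ] H)
    (hblock : ∀ ξ η : H,
      0 ≤ (⟪A ξ + adjoint T η, ξ⟫_ℂ + ⟪T ξ + ((1 : H →L[ℂ] H) - A) η, η⟫_ℂ).re) :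
    ∀ ξ : H, ‖ξ‖ = 1 → ‖⟪T ξ, ξ⟫_ℂ‖ ≤ 1 / 2 := by
  intro ξ hξ
  obtain ⟨c, hc, hcz⟩ := RCLike.exists_norm_eq_mul_self ⟪T ξ, ξ⟫_ℂ
  have h := hblock ξ (-c • ξ)
  rw [← RCLike.re_to_complex, re_blockForm_smul_eq T A ξ (by rwa [norm_neg]), hξ, neg_mul,
    ← hcz, map_neg, RCLike.ofReal_re] at h
  linarith

/-- If there is a selfadjoint `A` with `0 ≤ A ≤ I` such that the block operator
`[[A, T*], [T, I-A]]` on `H ⊕ H` is positive semidefinite (expressed via its quadratic form),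
then `w(T) ≤ 1/2`. -/
theorem numericalRadius_le_half_of_block_positive
    {H : Type*} [NormedAddCommGroup H] [InnerProductSpace ℂ H] [CompleteSpace H]
    (T A : H →L[ℂ] H) (hA : IsSelfAdjoint A)
    (hA0 : A.IsPositive) (hA1 : ((1 : H →L[ℂ] H) - A).IsPositive)
    (hblock : ∀ ξ η : H,
      0 ≤ (⟪A ξ + adjoint T η, ξ⟫_ℂ + ⟪T ξ + ((1 : H →L[ℂ] H) - A) η, η⟫_ℂ).re) :
    ∀ ξ : H, ‖ξ‖ = 1 → ‖⟪T ξ, ξ⟫_ℂ‖ ≤ 1 / 2 :=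
  numericalRadius_le_half_of_block_positive_general T A hblock
end

section
/- If T = (I+Y)^{1/2} Z (I−Y)^{1/2} with Y a selfadjoint contraction and Z a contraction that is isometric on the range of (I−Y)^{1/2}, then setting C = (1/√2)·Z(I−Y)^{1/2}, one has I − C*C = (1/2)(I+Y) and T = 2(I − C*C)^{1/2} C. -/
/-!
Since `(I - Y)^{1/2}` is selfadjoint, `C*C = ½ (I - Y)^{1/2} Z*Z (I - Y)^{1/2}`, which the isometry
condition turns into `½ (I - Y)`. Hence `I - C*C = ½ (I + Y)`, whose square root is
`(1/√2) (I + Y)^{1/2}`, and in `2 (I - C*C)^{1/2} C` the scalars `2 · (1/√2) · (1/√2)` cancel,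
leaving `(I + Y)^{1/2} Z (I - Y)^{1/2} = T`.
-/

open ContinuousLinearMap

lemma IsSelfAdjoint.star_smul_mul_mul_self {A : Type*} [NonUnitalRing A] [StarRing A] [Module ℝ A]
    [StarModule ℝ A] [IsScalarTower ℝ A A] [SMulCommClass ℝ A A] {b : A} (hb : IsSelfAdjoint b)
    (r : ℝ) (z : A) :
    star (r • (z * b)) * (r • (z * b)) = (r * r) • (b * (star z * z) * b) := by
  rw [star_smul, star_mul, hb.star_eq, star_trivial, smul_mul_smul_comm]
  noncomm_ring

namespace CFC

variable {A : Type*} [NonUnitalCStarAlgebra A] [PartialOrder A] [StarOrderedRing A]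

lemma sqrt_smul {r : ℝ} (hr : 0 ≤ r) (a : A) : sqrt (r • a) = √r • sqrt a := by
  rcases hr.eq_or_lt with rfl | hr
  · simp [sqrt_zero]
  by_cases ha : 0 ≤ a
  · refine sqrt_unique ?_ (smul_nonneg (Real.sqrt_nonneg r) (sqrt_nonneg a))
    rw [smul_mul_smul_comm, Real.mul_self_sqrt hr.le, sqrt_mul_sqrt_self a]
  · -- off the positive cone `sqrt` is `0`, and `r • a` lies off it too
    have hra : ¬ 0 ≤ r • a := fun h => ha <| by
      simpa [smul_smul, hr.ne'] using smul_nonneg (a := r⁻¹) (by positivity) h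
    rw [sqrt_of_not_nonneg ha, sqrt_of_not_nonneg hra, smul_zero]

end CFC

theorem ando_C_decomposition_general
    {H : Type*} [NormedAddCommGroup H] [InnerProductSpace ℂ H] [CompleteSpace H]
    (T Y Z : H →L[ℂ] H)
    (hiso : CFC.sqrt ((1 : H →L[ℂ] H) - Y) * (adjoint Z * Z) * CFC.sqrt ((1 : H →L[ℂ] H) - Y)
        = (1 : H →L[ℂ] H) - Y)
    (hT : T = CFC.sqrt ((1 : H →L[ℂ] H) + Y) * Z * CFC.sqrt ((1 : H →L[ℂ] H) - Y))
    (C : H →L[ℂ] H)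
    (hC : C = ((1 / Real.sqrt 2 : ℝ) : ℂ) • (Z * CFC.sqrt ((1 : H →L[ℂ] H) - Y))) :
    (1 : H →L[ℂ] H) - adjoint C * C = (1 / 2 : ℂ) • ((1 : H →L[ℂ] H) + Y) ∧
      T = (2 : ℂ) • (CFC.sqrt ((1 : H →L[ℂ] H) - adjoint C * C) * C) := by
  have hc : 1 / √2 * (1 / √2) = (1 / 2 : ℝ) := by
    rw [div_mul_div_comm, Real.mul_self_sqrt zero_le_two, one_mul]
  rw [Complex.coe_smul] at hC
  have hCC : adjoint C * C = (1 / 2 : ℝ) • (1 - Y) := by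
    rw [hC, ← star_eq_adjoint, (CFC.sqrt_nonneg _).isSelfAdjoint.star_smul_mul_mul_self, hc,
      star_eq_adjoint, hiso]
  have hdefect : 1 - adjoint C * C = (1 / 2 : ℝ) • (1 + Y) := by
    rw [hCC]; module
  refine ⟨by rw [hdefect, ← Complex.coe_smul]; norm_num, ?_⟩
  rw [hdefect, CFC.sqrt_smul (by norm_num), Real.sqrt_div' _ zero_le_two, Real.sqrt_one, hT, hC,
    smul_mul_smul_comm, hc, two_smul ℂ, ← two_smul ℝ, smul_smul]
  norm_num [mul_assoc]

/-- If `T = (I+Y)^{1/2} Z (I-Y)^{1/2}` with `Y` a selfadjoint contraction and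
`Z` a contraction which is isometric on the range of `(I-Y)^{1/2}` (i.e.
`(I-Y)^{1/2} Z* Z (I-Y)^{1/2} = I - Y`), then `C = (1/√2) Z (I-Y)^{1/2}` satisfies
`I - C*C = (I+Y)/2` and `T = 2 (I - C*C)^{1/2} C`. -/
theorem ando_C_decomposition
    {H : Type*} [NormedAddCommGroup H] [InnerProductSpace ℂ H] [CompleteSpace H]
    (T Y Z : H →L[ℂ] H) (hY : IsSelfAdjoint Y) (hYnorm : ‖Y‖ ≤ 1) (hZ : ‖Z‖ ≤ 1)
    (hiso : CFC.sqrt ((1 : H →L[ℂ] H) - Y) * (adjoint Z * Z) * CFC.sqrt ((1 : H →L[ℂ] H) - Y)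
        = (1 : H →L[ℂ] H) - Y)
    (hT : T = CFC.sqrt ((1 : H →L[ℂ] H) + Y) * Z * CFC.sqrt ((1 : H →L[ℂ] H) - Y))
    (C : H →L[ℂ] H)
    (hC : C = ((1 / Real.sqrt 2 : ℝ) : ℂ) • (Z * CFC.sqrt ((1 : H →L[ℂ] H) - Y))) :
    (1 : H →L[ℂ] H) - adjoint C * C = (1 / 2 : ℂ) • ((1 : H →L[ℂ] H) + Y) ∧
      T = (2 : ℂ) • (CFC.sqrt ((1 : H →L[ℂ] H) - adjoint C * C) * C) :=
  ando_C_decomposition_general T Y Z hiso hT C hC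
end

section
/- Let τ(λ) = Σ_{n=−N}^{N} a_n λ^n be a trigonometric polynomial with complex coefficients such that τ(λ) > 0 (real and strictly positive) for all λ on the unit circle. Then there exists a polynomial p(z) = Σ_{n=0}^{N} p_n z^n such that τ(λ) = |p(λ)|² for all λ on the unit circle. -/
/-!
Multiplying `τ` by `λ ^ N` gives a polynomial `q` of degree at most `2N`. That `τ` is real on the
circle says `q = X ^ (2N) * conj q (1 / X)`, so the roots of `q` are symmetric under
`r ↦ (conj r)⁻¹`, and positivity keeps them off the circle. For any root `r`, the factor
`(X - r) (1 - conj r X)` therefore divides `q`; it equals `λ ‖λ - r‖²` on the circle, so dividing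
it out leaves a positive trigonometric polynomial of degree `N - 1`, and induction on `N` produces
`p` as a product of the factors `X - r` times a constant.
-/
open Polynomial ComplexConjugate
open scoped ComplexOrder

lemma Complex.unitSphere_infinite : (Metric.sphere (0 : ℂ) 1).Infinite :=
  (isPreconnected_sphere (by simp [Complex.rank_real_complex]) 0 1).infinite_of_nontrivial
    ⟨1, by simp, -1, by simp, by norm_num⟩

lemma Polynomial.eq_of_eval_eq_on_circle {p q : ℂ[X]}
    (h : ∀ z : ℂ, ‖z‖ = 1 → p.eval z = q.eval z) : p = q :=
  eq_of_infinite_eval_eq p q <|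
    Complex.unitSphere_infinite.mono fun z hz => h z (by simpa using hz)

namespace Polynomial

noncomputable def conjReflect (n : ℕ) (p : ℂ[X]) : ℂ[X] :=
  reflect n (p.map (starRingEnd ℂ))

lemma coeff_conjReflect (n : ℕ) (p : ℂ[X]) (k : ℕ) :
    (conjReflect n p).coeff k = conj (p.coeff (revAt n k)) := by
  rw [conjReflect, coeff_reflect, coeff_map]

lemma eval_conjReflect {n : ℕ} {p : ℂ[X]} (hp : p.natDegree ≤ n) {z : ℂ} (hz : z ≠ 0) :
    (conjReflect n p).eval z = z ^ n * conj (p.eval (conj z)⁻¹) := by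
  have : Invertible z⁻¹ := invertibleOfNonzero (inv_ne_zero hz)
  have h := eval₂_reflect_mul_pow (RingHom.id ℂ) z⁻¹ n (p.map (starRingEnd ℂ))
    (by rwa [natDegree_map])
  rw [invOf_eq_inv, inv_inv, eval₂_id, eval₂_id, eval_map] at h
  rw [← eval₂_at_apply, map_inv₀, Complex.conj_conj, ← h, conjReflect, inv_pow,
    mul_comm _ (_ ^ n)⁻¹, mul_inv_cancel_left₀ (pow_ne_zero n hz)]

lemma conjReflect_eq_X_pow_mul {N M : ℕ} {q : ℂ[X]} (hqM : q.natDegree ≤ M) (hNM : 2 * N ≤ M)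
    (hq : ∀ z : ℂ, ‖z‖ = 1 → conj (q.eval z / z ^ N) = q.eval z / z ^ N) :
    conjReflect M q = X ^ (M - 2 * N) * q := by
  obtain ⟨k, rfl⟩ := Nat.exists_eq_add_of_le hNM
  refine eq_of_eval_eq_on_circle fun z hz => ?_
  have hz0 : z ≠ 0 := ne_zero_of_norm_ne_zero (by simp [hz])
  have hconj := hq z hz
  rw [map_div₀, map_pow, (Complex.inv_eq_conj hz).symm] at hconj
  rw [eval_conjReflect hqM hz0, (Complex.inv_eq_conj hz).symm, inv_inv, eval_mul,
    eval_pow, eval_X, Nat.add_sub_cancel_left]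
  field_simp at hconj
  have hzN : z ^ N * (1 / z) ^ N = 1 := by rw [← mul_pow, mul_one_div_cancel hz0, one_pow]
  linear_combination z ^ (N + k) * hconj + z ^ k * q.eval z * hzN

lemma natDegree_le_of_conj_eval_div_pow_eq {N : ℕ} {q : ℂ[X]}
    (hq : ∀ z : ℂ, ‖z‖ = 1 → conj (q.eval z / z ^ N) = q.eval z / z ^ N) :
    q.natDegree ≤ 2 * N := by
  obtain ⟨M, hqM, hNM⟩ : ∃ M, q.natDegree ≤ M ∧ 2 * N ≤ M :=
    ⟨_, le_max_left _ _, le_max_right _ _⟩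
  -- the coefficient of `q` at `j > 2N` is the conjugate of that of `X ^ (M - 2N) * q` at `M - j`
  have h := conjReflect_eq_X_pow_mul hqM hNM hq
  refine natDegree_le_iff_coeff_eq_zero.mpr fun j hj => ?_
  by_cases hjM : j ≤ M
  · have hcoeff := congrArg (coeff · (M - j)) h
    simp only [coeff_conjReflect, coeff_X_pow_mul', revAt_le (Nat.sub_le M j),
      Nat.sub_sub_self hjM] at hcoeff
    rwa [if_neg (by omega), map_eq_zero] at hcoeff
  · exact coeff_eq_zero_of_natDegree_lt (by omega)

lemma conjReflect_eq_self {N : ℕ} {q : ℂ[X]}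
    (hq : ∀ z : ℂ, ‖z‖ = 1 → conj (q.eval z / z ^ N) = q.eval z / z ^ N) :
    conjReflect (2 * N) q = q := by
  simpa using conjReflect_eq_X_pow_mul (natDegree_le_of_conj_eval_div_pow_eq hq) le_rfl hq

lemma IsRoot.inv_conj {N : ℕ} {q : ℂ[X]}
    (hq : ∀ z : ℂ, ‖z‖ = 1 → conj (q.eval z / z ^ N) = q.eval z / z ^ N)
    {r : ℂ} (hr : q.IsRoot r) (hr0 : r ≠ 0) : q.IsRoot (conj r)⁻¹ := by
  rw [IsRoot, ← conjReflect_eq_self hq,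
    eval_conjReflect (natDegree_le_of_conj_eval_div_pow_eq hq) (by simpa using hr0), map_inv₀,
    Complex.conj_conj, inv_inv, hr.eq_zero, map_zero, mul_zero]

lemma exists_isRoot_of_pos {N : ℕ} {q : ℂ[X]}
    (hq : ∀ z : ℂ, ‖z‖ = 1 → 0 < q.eval z / z ^ (N + 1)) : ∃ r, q.IsRoot r := by
  refine IsAlgClosed.exists_root q fun hdeg => ?_
  have hcoeff := congrArg (coeff · (2 * (N + 1)))
    (conjReflect_eq_self fun z hz => (IsSelfAdjoint.of_nonneg (hq z hz).le).star_eq)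
  simp only [coeff_conjReflect, revAt_le le_rfl, Nat.sub_self] at hcoeff
  rw [coeff_eq_zero_of_natDegree_lt (n := 2 * (N + 1))
    (by rw [natDegree_eq_zero_iff_degree_le_zero.mpr hdeg.le]; omega),
    map_eq_zero_iff _ (starRingEnd ℂ).injective] at hcoeff
  have hq0 : q = 0 := by rw [eq_C_of_degree_eq_zero hdeg, hcoeff, C_0]
  simpa [hq0] using hq 1 (by simp)

lemma isCoprime_X_sub_C_one_sub_C_conj_mul_X {r : ℂ} (hr : ‖r‖ ≠ 1) :
    IsCoprime (X - C r) (1 - C (conj r) * X) := by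
  have hd : 1 - conj r * r ≠ 0 := by
    rw [Complex.conj_mul', sub_ne_zero]
    exact_mod_cast fun h => hr (by nlinarith [norm_nonneg r])
  refine ⟨C (conj r * (1 - conj r * r)⁻¹), C (1 - conj r * r)⁻¹, ?_⟩
  have hC := congrArg C (inv_mul_cancel₀ hd)
  simp only [map_mul, map_sub, map_one] at hC ⊢
  linear_combination hC

lemma X_sub_C_mul_one_sub_C_conj_mul_X_dvd {q : ℂ[X]} {r : ℂ} (hr1 : ‖r‖ ≠ 1) (hr : q.IsRoot r)
    (hr' : r ≠ 0 → q.IsRoot (conj r)⁻¹) : (X - C r) * (1 - C (conj r) * X) ∣ q := by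
  refine (isCoprime_X_sub_C_one_sub_C_conj_mul_X hr1).mul_dvd (dvd_iff_isRoot.mpr hr) ?_
  rcases eq_or_ne r 0 with rfl | hr0
  · simp
  have hcr : conj r ≠ 0 := by simpa using hr0
  have hfactor : 1 - C (conj r) * X = C (-conj r) * (X - C (conj r)⁻¹) := by
    rw [mul_sub, ← C_mul, neg_mul, mul_inv_cancel₀ hcr, C_neg, C_neg, C_1]; ring
  rw [hfactor]
  exact (isUnit_C.mpr (neg_ne_zero.mpr hcr).isUnit).mul_left_dvd.mpr
    (dvd_iff_isRoot.mpr (hr' hr0))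

lemma eval_X_sub_C_mul_one_sub_C_conj_mul_X {r z : ℂ} (hz : ‖z‖ = 1) :
    ((X - C r) * (1 - C (conj r) * X)).eval z = z * (‖z - r‖ ^ 2 : ℝ) := by
  have hz0 : z ≠ 0 := ne_zero_of_norm_ne_zero (by simp [hz])
  rw [Complex.ofReal_pow, ← Complex.mul_conj', map_sub, (Complex.inv_eq_conj hz).symm]
  simp only [eval_mul, eval_sub, eval_X, eval_C, eval_one]
  field_simp

lemma exists_eq_X_sub_C_mul_one_sub_C_conj_mul_X_mul {N : ℕ} {q : ℂ[X]}
    (hq : ∀ z : ℂ, ‖z‖ = 1 → 0 < q.eval z / z ^ (N + 1)) :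
    ∃ r q₁, ‖r‖ ≠ 1 ∧ q = (X - C r) * (1 - C (conj r) * X) * q₁ := by
  have hreal := fun z hz => (IsSelfAdjoint.of_nonneg (hq z hz).le).star_eq
  obtain ⟨r, hr⟩ := exists_isRoot_of_pos hq
  have hr1 : ‖r‖ ≠ 1 := fun h => by simpa [hr.eq_zero] using hq r h
  obtain ⟨q₁, hq₁⟩ := X_sub_C_mul_one_sub_C_conj_mul_X_dvd hr1 hr (hr.inv_conj hreal)
  exact ⟨r, q₁, hr1, hq₁⟩

theorem exists_natDegree_le_eval_eq_pow_mul_norm_sq {N : ℕ} {q : ℂ[X]}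
    (hq : ∀ z : ℂ, ‖z‖ = 1 → 0 < q.eval z / z ^ N) :
    ∃ g : ℂ[X], g.natDegree ≤ N ∧
      ∀ z : ℂ, ‖z‖ = 1 → q.eval z = z ^ N * (‖g.eval z‖ ^ 2 : ℝ) := by
  induction N generalizing q with
  | zero =>
    have hreal := fun z hz => (IsSelfAdjoint.of_nonneg (hq z hz).le).star_eq
    obtain ⟨c, rfl⟩ : ∃ c, q = C c :=
      ⟨_, eq_C_of_natDegree_le_zero (natDegree_le_of_conj_eval_div_pow_eq hreal)⟩
    have hc : 0 < c := by simpa using hq 1 (by simp)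
    refine ⟨C (Real.sqrt c.re), by simp, fun z _ => ?_⟩
    rw [eval_C, eval_C, Complex.norm_real, Real.norm_of_nonneg (Real.sqrt_nonneg _),
      Real.sq_sqrt (Complex.pos_iff.mp hc).1.le, pow_zero, one_mul]
    exact (Complex.conj_eq_iff_re.mp (IsSelfAdjoint.of_nonneg hc.le).star_eq).symm
  | succ N ih =>
    obtain ⟨r, q₁, hr1, rfl⟩ := exists_eq_X_sub_C_mul_one_sub_C_conj_mul_X_mul hq
    have heval : ∀ z : ℂ, ‖z‖ = 1 → ((X - C r) * (1 - C (conj r) * X) * q₁).eval z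
        = z * (‖z - r‖ ^ 2 : ℝ) * q₁.eval z := fun z hz => by
      rw [eval_mul, eval_X_sub_C_mul_one_sub_C_conj_mul_X hz]
    have hzr : ∀ z : ℂ, ‖z‖ = 1 → 0 < ‖z - r‖ := fun z hz =>
      norm_pos_iff.mpr (sub_ne_zero.mpr fun h => hr1 (h ▸ hz))
    obtain ⟨g, hg, hq₁g⟩ := ih (q := q₁) fun z hz => by
      have hz0 : z ≠ 0 := ne_zero_of_norm_ne_zero (by simp [hz])
      have hs : ((‖z - r‖ ^ 2 : ℝ) : ℂ) ≠ 0 := by exact_mod_cast (pow_pos (hzr z hz) 2).ne'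
      have hdiv : q₁.eval z / z ^ N = (((X - C r) * (1 - C (conj r) * X) * q₁).eval z
          / z ^ (N + 1)) / ((‖z - r‖ ^ 2 : ℝ) : ℂ) := by
        rw [heval z hz]; field_simp; ring
      rw [hdiv]
      exact div_pos (hq z hz) (Complex.zero_lt_real.mpr (pow_pos (hzr z hz) 2))
    refine ⟨(X - C r) * g, natDegree_mul_le.trans (by rw [natDegree_X_sub_C]; omega),
      fun z hz => ?_⟩
    rw [heval z hz, hq₁g z hz, eval_mul, norm_mul, eval_sub, eval_X, eval_C]
    push_cast
    ring

noncomputable def ofLaurentSum (N : ℕ) (a : ℤ → ℂ) : ℂ[X] :=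
  ∑ n ∈ Finset.Icc (-(N : ℤ)) N, C (a n) * X ^ (n + N).toNat

lemma eval_ofLaurentSum (N : ℕ) (a : ℤ → ℂ) {z : ℂ} (hz : z ≠ 0) :
    (ofLaurentSum N a).eval z = z ^ N * ∑ n ∈ Finset.Icc (-(N : ℤ)) N, a n * z ^ n := by
  rw [ofLaurentSum, eval_finsetSum, Finset.mul_sum]
  refine Finset.sum_congr rfl fun n hn => ?_
  have hnN : (((n + N).toNat : ℕ) : ℤ) = n + N := Int.toNat_of_nonneg (by grind)
  rw [eval_mul, eval_C, eval_pow, eval_X, ← zpow_natCast, hnN, zpow_add₀ hz, zpow_natCast]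
  ring

end Polynomial

/-- Fejér–Riesz: if the trigonometric polynomial
`τ(λ) = ∑_{n=-N}^{N} aₙ λⁿ` is real and strictly positive on the unit circle, then there is a
polynomial `p(z) = ∑_{n=0}^{N} pₙ zⁿ` with `τ(λ) = |p(λ)|²` on the unit circle. -/
theorem fejer_riesz (N : ℕ) (a : ℤ → ℂ)
    (hpos : ∀ lam : ℂ, ‖lam‖ = 1 →
      (∑ n ∈ Finset.Icc (-(N : ℤ)) N, a n * lam ^ n).im = 0 ∧
      0 < (∑ n ∈ Finset.Icc (-(N : ℤ)) N, a n * lam ^ n).re) :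
    ∃ p : Fin (N + 1) → ℂ, ∀ lam : ℂ, ‖lam‖ = 1 →
      ∑ n ∈ Finset.Icc (-(N : ℤ)) N, a n * lam ^ n
        = ((‖∑ k : Fin (N + 1), p k * lam ^ (k : ℕ)‖ ^ 2 : ℝ) : ℂ) := by
  have hq : ∀ z : ℂ, ‖z‖ = 1 → 0 < (ofLaurentSum N a).eval z / z ^ N := fun z hz => by
    rw [eval_ofLaurentSum N a (ne_zero_of_norm_ne_zero (by simp [hz])),
      mul_div_cancel_left₀ _ (pow_ne_zero N (ne_zero_of_norm_ne_zero (by simp [hz])))]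
    exact Complex.pos_iff.mpr ⟨(hpos z hz).2, (hpos z hz).1.symm⟩
  obtain ⟨g, hg, hgq⟩ := exists_natDegree_le_eval_eq_pow_mul_norm_sq hq
  refine ⟨fun k => g.coeff k, fun z hz => ?_⟩
  have hz0 : z ≠ 0 := ne_zero_of_norm_ne_zero (by simp [hz])
  rw [Fin.sum_univ_eq_sum_range (fun k => g.coeff k * z ^ k), ← eval_eq_sum_range' (by omega)]
  exact mul_left_cancel₀ (pow_ne_zero N hz0) (by rw [← eval_ofLaurentSum N a hz0, hgq z hz])
end
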